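/- arXiv:2206.13739 — 3 statements merged into one kernel-verified Lean document; each statement's English description precedes it below -/
import Mathlib

section
/- Let A = (Q, ι, δ, F) be an NBA over a finite alphabet Σ and w : ℕ → Σ an infinite word, and consider the sequence (P_ℓ, O_ℓ) of the inherently-weak-SCC construction together with its colors. Then there exists an accepting run of A over w that eventually stays in an accepting inherently weak SCC (i.e., ∃ an accepting inherently weak SCC C and N ∈ ℕ with ρ(n) ∈ C for all n ≥ N) if and only if color 1 is received only finitely many times, i.e., O_ℓ = ∅ for only finitely many ℓ ∈ ℕ. -/
open scoped Classical

/-- A nondeterministic Büchi automaton with state type `Q` and alphabet `A`: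
an initial state, a transition relation (given as `trans : Q → A → Set Q`),
and a set `acc` of accepting transitions, which must be transitions of the automaton. -/
structure NBA (Q A : Type) where
  init : Q
  trans : Q → A → Set Q
  acc : Set (Q × A × Q)
  acc_sub : ∀ t ∈ acc, t.2.2 ∈ trans t.1 t.2.1

namespace NBA

variable {Q A : Type}

/-- `ρ` is a run of the NBA `M` over the infinite word `w`. -/
def IsRun (M : NBA Q A) (w : ℕ → A) (ρ : ℕ → Q) : Prop :=
  ρ 0 = M.init ∧ ∀ ℓ : ℕ, ρ (ℓ + 1) ∈ M.trans (ρ ℓ) (w ℓ)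

/-- `ρ` is an accepting run of `M` over `w`: a run taking accepting transitions
infinitely often. -/
def IsAcceptingRun (M : NBA Q A) (w : ℕ → A) (ρ : ℕ → Q) : Prop :=
  M.IsRun w ρ ∧ ∀ n : ℕ, ∃ ℓ ≥ n, (ρ ℓ, w ℓ, ρ (ℓ + 1)) ∈ M.acc

/-- `w` is in the language of `M`. -/
def InLanguage (M : NBA Q A) (w : ℕ → A) : Prop :=
  ∃ ρ : ℕ → Q, M.IsAcceptingRun w ρ

/-- `q'` is reachable from `q` (via a finite, possibly empty, word). -/
def Reach (M : NBA Q A) : Q → Q → Prop :=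
  Relation.ReflTransGen fun q q' => ∃ a : A, q' ∈ M.trans q a

/-- `C` is a strongly connected component: any two of its states are mutually
reachable, and it is maximal with this property. -/
def IsSCC (M : NBA Q A) (C : Set Q) : Prop :=
  (∀ q ∈ C, ∀ q' ∈ C, M.Reach q q' ∧ M.Reach q' q) ∧
  ∀ C' : Set Q, C ⊆ C' → (∀ q ∈ C', ∀ q' ∈ C', M.Reach q q' ∧ M.Reach q' q) → C' = C

/-- An SCC is accepting if it contains an accepting transition. -/
def AccSCC (M : NBA Q A) (C : Set Q) : Prop :=
  ∃ q ∈ C, ∃ a : A, ∃ q' ∈ C, (q, a, q') ∈ M.acc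

/-- A cycle through `C`: a nonempty finite sequence of transitions within
`C × A × C` starting and ending at the same state. -/
def IsCycle (M : NBA Q A) (C : Set Q) (n : ℕ) (p : ℕ → Q) (u : ℕ → A) : Prop :=
  1 ≤ n ∧ p n = p 0 ∧ ∀ i < n, p i ∈ C ∧ p (i + 1) ∈ C ∧ p (i + 1) ∈ M.trans (p i) (u i)

/-- The cycle visits an accepting transition. -/
def CycleHasAcc (M : NBA Q A) (n : ℕ) (p : ℕ → Q) (u : ℕ → A) : Prop :=
  ∃ i < n, (p i, u i, p (i + 1)) ∈ M.acc

/-- `C` is inherently weak: either every cycle through `C` contains an accepting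
transition, or no cycle through `C` does. -/
def InherentlyWeak (M : NBA Q A) (C : Set Q) : Prop :=
  (∀ n p u, M.IsCycle C n p u → M.CycleHasAcc n p u) ∨
  (∀ n p u, M.IsCycle C n p u → ¬ M.CycleHasAcc n p u)

/-- `δ(S, a)`, the set of successors of states of `S` under letter `a`. -/
def stepSet (M : NBA Q A) (S : Set Q) (a : A) : Set Q :=
  {q' | ∃ q ∈ S, q' ∈ M.trans q a}

/-- `S_ℓ`: the set of states reached at level `ℓ` of the run DAG of `M` over `w`. -/
def reachSet (M : NBA Q A) (w : ℕ → A) : ℕ → Set Q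
  | 0 => {M.init}
  | ℓ + 1 => M.stepSet (M.reachSet w ℓ) (w ℓ)

/-- `W`: the union of the inherently weak SCCs. -/
def weakStates (M : NBA Q A) : Set Q :=
  {q | ∃ C : Set Q, M.IsSCC C ∧ M.InherentlyWeak C ∧ q ∈ C}

/-- `WA`: the union of the accepting inherently weak SCCs. -/
def weakAccStates (M : NBA Q A) : Set Q :=
  {q | ∃ C : Set Q, M.IsSCC C ∧ M.InherentlyWeak C ∧ M.AccSCC C ∧ q ∈ C}

/-- The sequence `(P_ℓ, O_ℓ)` of the inherently-weak-SCC construction of `M` over `w`. -/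
noncomputable def weakSeq (M : NBA Q A) (w : ℕ → A) : ℕ → Set Q × Set Q
  | 0 => ({M.init} ∩ M.weakStates, ∅)
  | ℓ + 1 =>
      (M.reachSet w (ℓ + 1) ∩ M.weakStates,
        if (M.weakSeq w ℓ).2 = ∅ then
          (M.reachSet w (ℓ + 1) ∩ M.weakStates) ∩ M.weakAccStates
        else M.stepSet (M.weakSeq w ℓ).2 (w ℓ) ∩ M.weakAccStates)

end NBA

section Helpers

variable {Q A : Type}

/-- An antitone sequence of nonempty subsets of a finite type has a common element. -/
lemma exists_mem_all_of_antitone [Finite Q] (X : ℕ → Set Q)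
    (hne : ∀ m, (X m).Nonempty) (hanti : ∀ m, X (m + 1) ⊆ X m) :
    ∃ q, ∀ m, q ∈ X m := by
  have hchain : ∀ a b, a ≤ b → X b ⊆ X a := by
    intro a b hab
    induction b with
    | zero => simp [Nat.le_zero.mp hab]
    | succ b ih =>
      rcases lt_or_ge a (b+1) with h | h
      · exact (hanti b).trans (ih (Nat.lt_succ_iff.mp h))
      · have : a = b + 1 := le_antisymm hab h
        simp [this]
  have hSne : (Set.range fun m => (X m).ncard).Nonempty := ⟨(X 0).ncard, ⟨0, rfl⟩⟩
  obtain ⟨m0, hm0⟩ := Nat.sInf_mem hSne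
  obtain ⟨q, hq⟩ := hne m0
  refine ⟨q, fun m => ?_⟩
  rcases le_or_gt m m0 with h | h
  · exact hchain m m0 h hq
  · have hsub : X m ⊆ X m0 := hchain m0 m h.le
    have hle : (X m0).ncard ≤ (X m).ncard := by
      have h1 : sInf (Set.range fun m => (X m).ncard) ≤ (X m).ncard :=
        Nat.sInf_le (Set.mem_range_self m)
      have h2 : (X m0).ncard = sInf (Set.range fun m => (X m).ncard) := hm0
      omega
    have := Set.eq_of_subset_of_ncard_le hsub hle (Set.toFinite _)
    exact this ▸ hq

namespace NBA

lemma run_reach (M : NBA Q A) (w : ℕ → A) (ρ : ℕ → Q)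
    (hstep : ∀ ℓ : ℕ, ρ (ℓ + 1) ∈ M.trans (ρ ℓ) (w ℓ)) :
    ∀ a b, a ≤ b → M.Reach (ρ a) (ρ b) := by
  intro a b hab
  induction b with
  | zero => rw [Nat.le_zero.mp hab]; exact Relation.ReflTransGen.refl
  | succ b ih =>
    rcases lt_or_ge a (b+1) with h | h
    · exact (ih (Nat.lt_succ_iff.mp h)).tail ⟨w b, hstep b⟩
    · rw [le_antisymm hab h]; exact Relation.ReflTransGen.refl

/-- Absorption: a state mutually reachable with a state of an SCC lies in the SCC. -/
lemma mem_scc_of_between (M : NBA Q A) {C : Set Q} (hC : M.IsSCC C) {q x : Q}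
    (hq : q ∈ C) (h1 : M.Reach q x) (h2 : M.Reach x q) : x ∈ C := by
  have key : ∀ y ∈ insert x C, ∀ y' ∈ insert x C, M.Reach y y' ∧ M.Reach y' y := by
    intro y hy y' hy'
    have reach_of : ∀ z ∈ insert x C, M.Reach q z ∧ M.Reach z q := by
      intro z hz
      rcases hz with rfl | hz
      · exact ⟨h1, h2⟩
      · exact (hC.1 q hq z hz)
    obtain ⟨hqy, hyq⟩ := reach_of y hy
    obtain ⟨hqy', hy'q⟩ := reach_of y' hy'
    exact ⟨hyq.trans hqy', hy'q.trans hqy⟩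
  have := hC.2 (insert x C) (Set.subset_insert x C) key
  exact this ▸ Set.mem_insert x C

/-- A reachability witness between states of an SCC can be realized inside the SCC. -/
lemma path_in_scc (M : NBA Q A) (a0 : A) {C : Set Q} (hC : M.IsSCC C) {x y : Q}
    (hx : x ∈ C) (hy : y ∈ C) (hxy : M.Reach x y) :
    ∃ n : ℕ, ∃ p : ℕ → Q, ∃ u : ℕ → A, p 0 = x ∧ p n = y ∧
      ∀ i < n, p i ∈ C ∧ p (i + 1) ∈ C ∧ p (i + 1) ∈ M.trans (p i) (u i) := by
  revert hx
  induction hxy using Relation.ReflTransGen.head_induction_on with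
  | refl => exact fun _ => ⟨0, (fun _ => y), (fun _ => a0), rfl, rfl, by omega⟩
  | @head a c h' h ih =>
    intro hx
    have hcC : c ∈ C :=
      M.mem_scc_of_between hC hy ((hC.1 y hy a hx).1.tail h') h
    obtain ⟨n, p, u, hp0, hpn, hprop⟩ := ih hcC
    obtain ⟨l, hl⟩ := h'
    refine ⟨n + 1, (fun i => match i with | 0 => a | (i+1) => p i),
      (fun i => match i with | 0 => l | (i+1) => u i), rfl, hpn, ?_⟩
    intro i hi
    match i with
    | 0 => exact ⟨hx, by simpa [hp0] using hcC, by simpa [hp0] using hl⟩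
    | (i+1) => exact hprop i (by omega)

/-- In an accepting inherently weak SCC, every cycle has an accepting transition. -/
lemma scc_all_cycles_acc (M : NBA Q A) {C : Set Q} (hC : M.IsSCC C)
    (hIW : M.InherentlyWeak C) (hAcc : M.AccSCC C) :
    ∀ n p u, M.IsCycle C n p u → M.CycleHasAcc n p u := by
  rcases hIW with h | h
  · exact h
  · exfalso
    obtain ⟨q1, hq1, a, q2, hq2, hacc⟩ := hAcc
    have hreach : M.Reach q2 q1 := (hC.1 q2 hq2 q1 hq1).1
    obtain ⟨n, p, u, hp0, hpn, hprop⟩ := M.path_in_scc a hC hq2 hq1 hreach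
    set p' : ℕ → Q := fun i => if i ≤ n then p i else q2 with hp'
    set u' : ℕ → A := fun i => if i < n then u i else a with hu'
    have hcyc : M.IsCycle C (n + 1) p' u' := by
      refine ⟨by omega, by simp [hp', hp0], ?_⟩
      intro i hi
      rcases lt_or_ge i n with h1 | h1
      · have := hprop i h1
        simpa [hp', hu', h1, h1.le, Nat.succ_le_of_lt h1] using this
      · have hi' : i = n := by omega
        subst hi'
        have : p' i = q1 := by simp [hp', hpn]
        constructor
        · simpa [this] using hq1
        constructor
        · simpa [hp'] using hq2
        · have : p' (i+1) = q2 := by simp [hp']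
          rw [this]
          have hpin : p' i = q1 := by simp [hp', hpn]
          rw [hpin]
          have hu : u' i = a := by simp [hu']
          rw [hu]
          exact M.acc_sub (q1, a, q2) hacc
    have hhas : M.CycleHasAcc (n + 1) p' u' := by
      refine ⟨n, by omega, ?_⟩
      have h1 : p' n = q1 := by simp [hp', hpn]
      have h2 : p' (n+1) = q2 := by simp [hp']
      have h3 : u' n = a := by simp [hu']
      rw [h1, h2, h3]; exact hacc
    exact h _ _ _ hcyc hhas

lemma run_mem_reachSet (M : NBA Q A) (w : ℕ → A) (ρ : ℕ → Q)
    (h0 : ρ 0 = M.init) (hstep : ∀ ℓ : ℕ, ρ (ℓ + 1) ∈ M.trans (ρ ℓ) (w ℓ)) :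
    ∀ ℓ, ρ ℓ ∈ M.reachSet w ℓ := by
  intro ℓ
  induction ℓ with
  | zero => simp [reachSet, h0]
  | succ ℓ ih => exact ⟨ρ ℓ, ih, hstep ℓ⟩

lemma prefix_path (M : NBA Q A) (w : ℕ → A) :
    ∀ n, ∀ q ∈ M.reachSet w n, ∃ r : ℕ → Q, r 0 = M.init ∧ r n = q ∧
      ∀ i < n, r (i + 1) ∈ M.trans (r i) (w i) := by
  intro n
  induction n with
  | zero =>
    intro q hq
    simp only [reachSet, Set.mem_singleton_iff] at hq
    exact ⟨fun _ => q, hq, rfl, by omega⟩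
  | succ n ih =>
    intro q hq
    obtain ⟨p, hp, hq⟩ := hq
    obtain ⟨r, hr0, hrn, hrstep⟩ := ih p hp
    refine ⟨fun i => if i = n + 1 then q else r i, by simp [hr0, Nat.succ_ne_zero], by simp, ?_⟩
    intro i hi
    rcases lt_or_ge i n with h1 | h1
    · have e1 : i ≠ n + 1 := by omega
      have e2 : i + 1 ≠ n + 1 := by omega
      simpa [e1, e2, show i ≠ n by omega] using hrstep i h1
    · have hi' : i = n := by omega
      subst hi'
      have e1 : i ≠ i + 1 := by omega
      simp [e1, hrn, hq]

end NBA
end Helpers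

/-- There is an accepting run of `M` over `w` eventually staying
in an accepting inherently weak SCC iff, in the inherently-weak-SCC construction,
`O_ℓ = ∅` for only finitely many `ℓ` (i.e. color 1 is received finitely often). -/
theorem iwc_accepting_iff_finitely_many_empty_O {Q A : Type} [Finite Q] [Finite A]
    (M : NBA Q A) (w : ℕ → A) :
    (∃ ρ : ℕ → Q, M.IsAcceptingRun w ρ ∧
        ∃ C : Set Q, M.IsSCC C ∧ M.InherentlyWeak C ∧ M.AccSCC C ∧
          ∃ N : ℕ, ∀ n ≥ N, ρ n ∈ C) ↔
      {ℓ : ℕ | (M.weakSeq w ℓ).2 = ∅}.Finite := by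
  constructor
  · rintro ⟨ρ, ⟨⟨hρ0, hρstep⟩, -⟩, C, hSCC, hIW, hAcc, N, hC⟩
    have hρS := M.run_mem_reachSet w ρ hρ0 hρstep
    have hρWA : ∀ n, N ≤ n → ρ n ∈ M.weakAccStates :=
      fun n hn => ⟨C, hSCC, hIW, hAcc, hC n hn⟩
    have hρW : ∀ n, N ≤ n → ρ n ∈ M.weakStates :=
      fun n hn => ⟨C, hSCC, hIW, hC n hn⟩
    by_contra hinf
    rw [← Set.not_infinite, not_not] at hinf
    obtain ⟨ℓ₀, hℓ₀mem, hℓ₀N⟩ := hinf.exists_gt N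
    have hℓ₀ : (M.weakSeq w ℓ₀).2 = ∅ := hℓ₀mem
    have hmem : ∀ k, ρ (ℓ₀ + 1 + k) ∈ (M.weakSeq w (ℓ₀ + 1 + k)).2 := by
      intro k
      induction k with
      | zero =>
        show ρ (ℓ₀ + 1) ∈ (M.weakSeq w (ℓ₀ + 1)).2
        have he : (M.weakSeq w (ℓ₀ + 1)).2 =
            (M.reachSet w (ℓ₀ + 1) ∩ M.weakStates) ∩ M.weakAccStates := by
          simp [NBA.weakSeq, hℓ₀]
        rw [he]
        exact ⟨⟨hρS _, hρW _ (by omega)⟩, hρWA _ (by omega)⟩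
      | succ k ih =>
        have hne : (M.weakSeq w (ℓ₀ + 1 + k)).2 ≠ ∅ := by
          intro h
          rw [h] at ih
          exact ih
        have he : (M.weakSeq w ((ℓ₀ + 1 + k) + 1)).2 =
            M.stepSet (M.weakSeq w (ℓ₀ + 1 + k)).2 (w (ℓ₀ + 1 + k)) ∩ M.weakAccStates := by
          simp [NBA.weakSeq, hne]
        show ρ ((ℓ₀ + 1 + k) + 1) ∈ (M.weakSeq w ((ℓ₀ + 1 + k) + 1)).2
        rw [he]
        exact ⟨⟨ρ (ℓ₀ + 1 + k), ih, hρstep _⟩, hρWA _ (by omega)⟩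
    have hsub : {ℓ : ℕ | (M.weakSeq w ℓ).2 = ∅} ⊆ Set.Iic ℓ₀ := by
      intro ℓ hℓ
      by_contra hgt
      have hgt' : ℓ₀ < ℓ := by simpa using hgt
      obtain ⟨k, rfl⟩ : ∃ k, ℓ = ℓ₀ + 1 + k := ⟨ℓ - ℓ₀ - 1, by omega⟩
      have h1 := hmem k
      rw [show (M.weakSeq w (ℓ₀ + 1 + k)).2 = ∅ from hℓ] at h1
      exact h1
    exact hinf (Set.Finite.subset (Set.finite_Iic ℓ₀) hsub)
  · intro hfin
    obtain ⟨N0, hN0⟩ := hfin.bddAbove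
    set N : ℕ := N0 + 1 with hNdef
    have hN1 : 1 ≤ N := by omega
    have hNne : ∀ ℓ, N ≤ ℓ → (M.weakSeq w ℓ).2 ≠ ∅ := by
      intro ℓ hℓ h
      have := hN0 (show ℓ ∈ {ℓ : ℕ | (M.weakSeq w ℓ).2 = ∅} from h)
      omega
    have hOWA : ∀ ℓ, (M.weakSeq w (ℓ + 1)).2 ⊆ M.weakAccStates := by
      intro ℓ
      simp only [NBA.weakSeq]
      split <;> exact Set.inter_subset_right
    have hOS : ∀ ℓ, (M.weakSeq w ℓ).2 ⊆ M.reachSet w ℓ := by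
      intro ℓ
      induction ℓ with
      | zero => simp [NBA.weakSeq]
      | succ ℓ ih =>
        show (M.weakSeq w (ℓ + 1)).2 ⊆ _
        simp only [NBA.weakSeq]
        split
        · exact Set.inter_subset_left.trans Set.inter_subset_left
        · refine Set.inter_subset_left.trans ?_
          rintro q ⟨p, hp, h⟩
          exact ⟨p, ih hp, h⟩
    have hstepO : ∀ ℓ, N ≤ ℓ → (M.weakSeq w (ℓ + 1)).2 =
        M.stepSet (M.weakSeq w ℓ).2 (w ℓ) ∩ M.weakAccStates := by
      intro ℓ hℓ
      simp only [NBA.weakSeq]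
      rw [if_neg (hNne ℓ hℓ)]
    -- D k := O (N + k)
    set D : ℕ → Set Q := fun k => (M.weakSeq w (N + k)).2 with hD
    have hDne : ∀ k, (D k).Nonempty :=
      fun k => Set.nonempty_iff_ne_empty.mpr (hNne (N + k) (by omega))
    have hDstep : ∀ k, D (k + 1) = M.stepSet (D k) (w (N + k)) ∩ M.weakAccStates := by
      intro k
      show (M.weakSeq w (N + (k + 1))).2 = _
      rw [show N + (k + 1) = (N + k) + 1 by omega]
      exact hstepO (N + k) (by omega)
    have hDWA : ∀ k, D k ⊆ M.weakAccStates := by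
      intro k
      show (M.weakSeq w (N + k)).2 ⊆ _
      rw [show N + k = (N0 + k) + 1 by omega]
      exact hOWA (N0 + k)
    -- the sets X k m of states of D k admitting a path of length m along the D's
    set X : ℕ → ℕ → Set Q := fun k m => {q | ∃ r : ℕ → Q, r 0 = q ∧
      (∀ i ≤ m, r i ∈ D (k + i)) ∧ ∀ i < m, r (i + 1) ∈ M.trans (r i) (w (N + k + i))} with hX
    have hXne : ∀ m k, (X k m).Nonempty := by
      intro m
      induction m with
      | zero =>
        intro k
        obtain ⟨q, hq⟩ := hDne k
        refine ⟨q, fun _ => q, rfl, ?_, by omega⟩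
        intro i hi
        have : i = 0 := by omega
        subst this
        exact hq
      | succ m ih =>
        intro k
        obtain ⟨q', r', hr'0, hr'mem, hr'tr⟩ := ih (k + 1)
        have hq'D : q' ∈ D (k + 1) := by
          have := hr'mem 0 (by omega)
          rwa [hr'0] at this
        rw [hDstep k] at hq'D
        obtain ⟨⟨p, hpD, hptr⟩, -⟩ := hq'D
        refine ⟨p, fun i => match i with | 0 => p | (i+1) => r' i, rfl, ?_, ?_⟩
        · intro i hi
          match i with
          | 0 => exact hpD
          | (i+1) =>
            show r' i ∈ D (k + (i + 1))
            rw [show k + (i + 1) = (k + 1) + i by omega]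
            exact hr'mem i (by omega)
        · intro i hi
          match i with
          | 0 =>
            show r' 0 ∈ M.trans p (w (N + k + 0))
            rw [hr'0]
            exact hptr
          | (i+1) =>
            show r' (i + 1) ∈ M.trans (r' i) (w (N + k + (i + 1)))
            rw [show N + k + (i + 1) = N + (k + 1) + i by omega]
            exact hr'tr i (by omega)
    have hXanti : ∀ k m, X k (m + 1) ⊆ X k m := by
      rintro k m q ⟨r, h0, hmem, htr⟩
      exact ⟨r, h0, fun i hi => hmem i (by omega), fun i hi => htr i (by omega)⟩
    have hXD : ∀ k q, (∀ m, q ∈ X k m) → q ∈ D k := by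
      intro k q hq
      obtain ⟨r, h0, hmem, -⟩ := hq 0
      have := hmem 0 (le_refl 0)
      rwa [h0] at this
    have hB : ∀ k q, (∀ m, q ∈ X k m) →
        ∃ q', q' ∈ M.trans q (w (N + k)) ∧ ∀ m, q' ∈ X (k + 1) m := by
      intro k q hq
      have hYne : ∀ m, ({q' | q' ∈ M.trans q (w (N + k)) ∧ q' ∈ X (k + 1) m} : Set Q).Nonempty := by
        intro m
        obtain ⟨r, h0, hmem, htr⟩ := hq (m + 1)
        refine ⟨r 1, ?_, ?_⟩
        · have := htr 0 (by omega)
          rwa [h0] at this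
        · refine ⟨fun i => r (i + 1), rfl, ?_, ?_⟩
          · intro i hi
            show r (i + 1) ∈ D ((k + 1) + i)
            rw [show (k + 1) + i = k + (i + 1) by omega]
            exact hmem (i + 1) (by omega)
          · intro i hi
            show r (i + 2) ∈ M.trans (r (i + 1)) (w (N + (k + 1) + i))
            rw [show N + (k + 1) + i = N + k + (i + 1) by omega]
            exact htr (i + 1) (by omega)
      have hYanti : ∀ m, ({q' | q' ∈ M.trans q (w (N + k)) ∧ q' ∈ X (k + 1) m} : Set Q) ⊇
          {q' | q' ∈ M.trans q (w (N + k)) ∧ q' ∈ X (k + 1) (m + 1)} :=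
        fun m q' hq' => ⟨hq'.1, hXanti (k + 1) m hq'.2⟩
      obtain ⟨q', hq'⟩ := exists_mem_all_of_antitone _ hYne hYanti
      exact ⟨q', (hq' 0).1, fun m => (hq' m).2⟩
    choose f hf1 hf2 using hB
    obtain ⟨q0, hq0⟩ : ∃ q, ∀ m, q ∈ X 0 m :=
      exists_mem_all_of_antitone (X 0) (fun m => hXne m 0) (hXanti 0)
    let G : (k : ℕ) → {q : Q // ∀ m, q ∈ X k m} := fun k =>
      Nat.rec ⟨q0, hq0⟩ (fun k ih => ⟨f k ih.1 ih.2, hf2 k ih.1 ih.2⟩) k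
    have hGtr : ∀ k, (G (k + 1)).1 ∈ M.trans ((G k).1) (w (N + k)) :=
      fun k => hf1 k (G k).1 (G k).2
    have hGD : ∀ k, (G k).1 ∈ D k := fun k => hXD k (G k).1 (G k).2
    -- prefix from the initial state to (G 0).1 ∈ D 0 ⊆ reachSet N
    have hG0S : (G 0).1 ∈ M.reachSet w N := hOS N (hGD 0)
    obtain ⟨r, hr0, hrN, hrtr⟩ := M.prefix_path w N (G 0).1 hG0S
    set ρ : ℕ → Q := fun n => if n < N then r n else (G (n - N)).1 with hρ
    have hρeq : ∀ n, N ≤ n → ρ n = (G (n - N)).1 := by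
      intro n hn
      simp only [hρ]
      rw [if_neg (by omega)]
    have hρ0 : ρ 0 = M.init := by
      simp only [hρ]
      rw [if_pos (by omega)]
      exact hr0
    have hρstep : ∀ ℓ : ℕ, ρ (ℓ + 1) ∈ M.trans (ρ ℓ) (w ℓ) := by
      intro ℓ
      rcases lt_trichotomy (ℓ + 1) N with h | h | h
      · have h1 : ρ ℓ = r ℓ := by simp only [hρ]; rw [if_pos (by omega)]
        have h2 : ρ (ℓ + 1) = r (ℓ + 1) := by simp only [hρ]; rw [if_pos h]
        rw [h1, h2]
        exact hrtr ℓ (by omega)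
      · have h1 : ρ ℓ = r ℓ := by simp only [hρ]; rw [if_pos (by omega)]
        have h2 : ρ (ℓ + 1) = r (ℓ + 1) := by
          rw [hρeq (ℓ + 1) (by omega), show ℓ + 1 - N = 0 by omega, h, hrN]
        rw [h1, h2]
        exact hrtr ℓ (by omega)
      · have hN' : N ≤ ℓ := by omega
        rw [hρeq ℓ hN', hρeq (ℓ + 1) (by omega),
          show ℓ + 1 - N = (ℓ - N) + 1 by omega]
        have := hGtr (ℓ - N)
        rwa [show N + (ℓ - N) = ℓ by omega] at this
    have hρWA : ∀ n, N ≤ n → ρ n ∈ M.weakAccStates := by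
      intro n hn
      rw [hρeq n hn]
      exact hDWA (n - N) (hGD (n - N))
    -- a state visited infinitely often
    obtain ⟨qs, hqs⟩ := Finite.exists_infinite_fiber ρ
    have hqinf : (ρ ⁻¹' {qs}).Infinite := Set.infinite_coe_iff.mp hqs
    have hocc : ∀ n, ∃ m, n ≤ m ∧ ρ m = qs := by
      intro n
      obtain ⟨b, hb, hbn⟩ := hqinf.exists_gt n
      exact ⟨b, hbn.le, hb⟩
    obtain ⟨n₀, hn₀N, hn₀q⟩ := hocc N
    have hqsWA : qs ∈ M.weakAccStates := hn₀q ▸ hρWA n₀ hn₀N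
    obtain ⟨C, hSCC, hIW, hAcc, hqC⟩ := hqsWA
    have hreachrun := M.run_reach w ρ hρstep
    have hCmem : ∀ n, n₀ ≤ n → ρ n ∈ C := by
      intro n hn
      obtain ⟨m, hm, hmq⟩ := hocc n
      have h1 : M.Reach qs (ρ n) := hn₀q ▸ hreachrun n₀ n hn
      have h2 : M.Reach (ρ n) qs := hmq ▸ hreachrun n m hm
      exact M.mem_scc_of_between hSCC hqC h1 h2
    have haccept : ∀ n : ℕ, ∃ ℓ ≥ n, (ρ ℓ, w ℓ, ρ (ℓ + 1)) ∈ M.acc := by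
      intro n
      obtain ⟨m1, hm1, hm1q⟩ := hocc (max n n₀)
      have hm1n : n ≤ m1 := le_trans (le_max_left n n₀) hm1
      have hm1n₀ : n₀ ≤ m1 := le_trans (le_max_right n n₀) hm1
      obtain ⟨m2, hm2, hm2q⟩ := hocc (m1 + 1)
      have hcyc : M.IsCycle C (m2 - m1) (fun i => ρ (m1 + i)) (fun i => w (m1 + i)) := by
        refine ⟨by omega, ?_, ?_⟩
        · show ρ (m1 + (m2 - m1)) = ρ (m1 + 0)
          rw [show m1 + (m2 - m1) = m2 by omega, show m1 + 0 = m1 by omega, hm2q, hm1q]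
        · intro i hi
          exact ⟨hCmem _ (by omega), hCmem _ (by omega), hρstep (m1 + i)⟩
      obtain ⟨i, hi, hiacc⟩ := M.scc_all_cycles_acc hSCC hIW hAcc _ _ _ hcyc
      exact ⟨m1 + i, by omega, hiacc⟩
    exact ⟨ρ, ⟨⟨hρ0, hρstep⟩, haccept⟩, C, hSCC, hIW, hAcc, n₀, hCmem⟩
end

section
/- Let A = (Q, ι, δ, F) be an NBA over a finite alphabet Σ, let w : ℕ → Σ be an infinite word, and consider the sequence (P_ℓ, O_ℓ) of the inherently-weak-SCC construction. If there exists k ∈ ℕ such that O_ℓ ≠ ∅ for all ℓ ≥ k, then there exists a run ρ of A over w with ρ(ℓ) ∈ O_ℓ for all ℓ ≥ k; moreover any such run eventually stays in an accepting inherently weak SCC and is accepting. -/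
open scoped Classical

/-! The sets `S_ℓ`, cut down to `O_ℓ` from level `k` on, form a layered graph in which every
state has a predecessor in the previous layer (from level `k` on because
`O_{ℓ+1} = δ(O_ℓ, w ℓ) ∩ WA` while `O_ℓ ≠ ∅`); Kőnig's lemma yields an infinite path through
the layers, which is a run since `S_0 = {ι}`. Conversely, a run that stays in `WA` from
level `k` on revisits some state `q` infinitely often; everything between two visits is
mutually reachable with `q`, so the run is eventually trapped in the SCC of `q`, which is
accepting and inherently weak. Each return to a state then closes a cycle through this SCC,
and such cycles all contain an accepting transition, since one accepting cycle exists. -/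

section Layered

variable {α : Type*} {S : ℕ → Set α} {R : ℕ → α → α → Prop}

theorem exists_path_of_forall_exists_pred (hpred : ∀ n, ∀ y ∈ S (n + 1), ∃ x ∈ S n, R n x y)
    (n : ℕ) {y : α} (hy : y ∈ S n) :
    ∃ p : ℕ → α, p n = y ∧ (∀ i ≤ n, p i ∈ S i) ∧ ∀ i < n, R i (p i) (p (i + 1)) := by
  induction n generalizing y with
  | zero => exact ⟨fun _ => y, rfl, fun i hi => by rwa [Nat.le_zero.mp hi], by simp⟩
  | succ n ih =>
    obtain ⟨x, hx, hxy⟩ := hpred n y hy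
    obtain ⟨p, rfl, hpS, hpR⟩ := ih hx
    refine ⟨Function.update p (n + 1) y, by simp, fun i hi => ?_, fun i hi => ?_⟩
    · rcases hi.lt_or_eq with hi | rfl
      · rw [Function.update_of_ne hi.ne]
        exact hpS i (Nat.le_of_lt_succ hi)
      · simpa
    · rw [Function.update_of_ne (by omega : i ≠ n + 1)]
      rcases (Nat.le_of_lt_succ hi).lt_or_eq with hi | rfl
      · rw [Function.update_of_ne (by omega : i + 1 ≠ n + 1)]
        exact hpR i hi
      · simpa

/-- Kőnig's lemma for layered graphs. -/
theorem exists_seq_of_forall_exists_pred [Finite α]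
    (hpred : ∀ n, ∀ y ∈ S (n + 1), ∃ x ∈ S n, R n x y) (hne : ∀ n, (S n).Nonempty) :
    ∃ σ : ℕ → α, (∀ n, σ n ∈ S n) ∧ ∀ n, R n (σ n) (σ (n + 1)) := by
  let Path (n : ℕ) := {p : Fin (n + 1) → α //
    (∀ i : Fin (n + 1), p i ∈ S i) ∧ ∀ i : Fin n, R i (p i.castSucc) (p i.succ)}
  have (n : ℕ) : Nonempty (Path n) := by
    obtain ⟨y, hy⟩ := hne n
    obtain ⟨p, -, hpS, hpR⟩ := exists_path_of_forall_exists_pred hpred n hy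
    exact ⟨⟨fun i => p i, fun i => hpS i (Nat.le_of_lt_succ i.2), fun i => hpR i i.2⟩⟩
  let restrict {i j : ℕ} (hij : i ≤ j) (p : Path j) : Path i :=
    ⟨fun t => p.1 (Fin.castLE (by omega) t), fun t => p.2.1 (Fin.castLE (by omega) t),
      fun t => p.2.2 (Fin.castLE hij t)⟩
  obtain ⟨f, hf⟩ := exists_seq_forall_proj_of_forall_finite restrict (fun _ _ => rfl)
    (fun _ _ _ _ _ _ => rfl) (fun _ _ => Set.toFinite _)
  refine ⟨fun n => (f n).1 (Fin.last n), fun n => (f n).2.1 (Fin.last n), fun n => ?_⟩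
  have hlast : (f (n + 1)).1 (Fin.castSucc (Fin.last n)) = (f n).1 (Fin.last n) := by
    rw [← hf n.le_succ]; rfl
  simpa [hlast] using (f (n + 1)).2.2 (Fin.last n)

end Layered

namespace NBA

variable {Q A : Type} {M : NBA Q A}

theorem reach_of_path {p : ℕ → Q} {u : ℕ → A} {n : ℕ}
    (hstep : ∀ i < n, p (i + 1) ∈ M.trans (p i) (u i)) {i j : ℕ} (hij : i ≤ j) (hjn : j ≤ n) :
    M.Reach (p i) (p j) := by
  induction j, hij using Nat.le_induction with
  | base => exact .refl
  | succ j _ ih => exact (ih (by omega)).tail ⟨u j, hstep j (by omega)⟩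

theorem Reach.exists_path [Nonempty A] {x y : Q} (h : M.Reach x y) :
    ∃ n, ∃ p : ℕ → Q, ∃ u : ℕ → A,
      p 0 = x ∧ p n = y ∧ ∀ i < n, p (i + 1) ∈ M.trans (p i) (u i) := by
  induction h using Relation.ReflTransGen.head_induction_on with
  | refl => exact ⟨0, fun _ => y, Classical.arbitrary _, rfl, rfl, by simp⟩
  | head hxz _ ih =>
    obtain ⟨a, hxz⟩ := hxz
    obtain ⟨n, p, u, rfl, rfl, hstep⟩ := ih
    refine ⟨n + 1, fun | 0 => _ | i + 1 => p i, fun | 0 => a | i + 1 => u i, rfl, rfl, ?_⟩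
    rintro (_ | i) hi
    · exact hxz
    · exact hstep i (by omega)

theorem IsSCC.mem_of_reach {C : Set Q} (hC : M.IsSCC C) {q r : Q} (hq : q ∈ C)
    (hqr : M.Reach q r) (hrq : M.Reach r q) : r ∈ C := by
  have hmutual : ∀ x ∈ insert r C, ∀ y ∈ insert r C, M.Reach x y ∧ M.Reach y x := by
    have hr : ∀ x ∈ insert r C, M.Reach q x ∧ M.Reach x q := by
      rintro x (rfl | hx)
      · exact ⟨hqr, hrq⟩
      · exact hC.1 q hq x hx
    intro x hx y hy
    exact ⟨(hr x hx).2.trans (hr y hy).1, (hr y hy).2.trans (hr x hx).1⟩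
  exact hC.2 _ (Set.subset_insert r C) hmutual ▸ Set.mem_insert r C

/-- An accepting transition of `C` followed by a path back inside `C` is an accepting cycle,
so `C` is not of the non-accepting kind. -/
theorem InherentlyWeak.cycleHasAcc {C : Set Q} (hSCC : M.IsSCC C) (hW : M.InherentlyWeak C)
    (hAcc : M.AccSCC C) {n : ℕ} {p : ℕ → Q} {u : ℕ → A} (hcyc : M.IsCycle C n p u) :
    M.CycleHasAcc n p u := by
  refine hW.resolve_right (fun hnone => ?_) n p u hcyc
  obtain ⟨q₀, hq₀, a, q₁, hq₁, hacc⟩ := hAcc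
  have htrans : q₁ ∈ M.trans q₀ a := M.acc_sub _ hacc
  have : Nonempty A := ⟨a⟩
  obtain ⟨m, p', u', rfl, hp'm, hstep⟩ := (hSCC.1 q₁ hq₁ q₀ hq₀).1.exists_path
  have hp'C : ∀ i ≤ m, p' i ∈ C := fun i hi =>
    hSCC.mem_of_reach hq₁ (reach_of_path hstep (Nat.zero_le i) hi)
      ((hp'm ▸ reach_of_path hstep hi le_rfl).tail ⟨a, htrans⟩)
  refine hnone (m + 1) (fun | 0 => q₀ | i + 1 => p' i) (fun | 0 => a | i + 1 => u' i)
    ⟨by omega, hp'm, ?_⟩ ⟨0, by omega, hacc⟩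
  rintro (_ | i) hi
  · exact ⟨hq₀, hq₁, htrans⟩
  · exact ⟨hp'C i (by omega), hp'C (i + 1) (by omega), hstep i (by omega)⟩

theorem weakSeq_snd_subset (w : ℕ → A) (ℓ : ℕ) :
    (M.weakSeq w ℓ).2 ⊆ M.reachSet w ℓ ∩ M.weakAccStates := by
  induction ℓ with
  | zero => simp [weakSeq]
  | succ ℓ ih =>
    rw [weakSeq]
    split
    · exact fun q hq => ⟨hq.1.1, hq.2⟩
    · rintro q ⟨⟨x, hx, hxq⟩, hq⟩
      exact ⟨⟨x, (ih hx).1, hxq⟩, hq⟩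

theorem weakSeq_snd_succ_of_ne_empty {w : ℕ → A} {ℓ : ℕ} (h : (M.weakSeq w ℓ).2 ≠ ∅) :
    (M.weakSeq w (ℓ + 1)).2 = M.stepSet (M.weakSeq w ℓ).2 (w ℓ) ∩ M.weakAccStates := by
  simp [weakSeq, h]

theorem exists_run_forall_ge_mem_weakSeq_snd [Finite Q] {w : ℕ → A} {k : ℕ}
    (hk : ∀ ℓ ≥ k, (M.weakSeq w ℓ).2 ≠ ∅) :
    ∃ ρ : ℕ → Q, M.IsRun w ρ ∧ ∀ ℓ ≥ k, ρ ℓ ∈ (M.weakSeq w ℓ).2 := by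
  let S (n : ℕ) : Set Q := {q ∈ M.reachSet w n | k ≤ n → q ∈ (M.weakSeq w n).2}
  have hpred : ∀ n, ∀ y ∈ S (n + 1), ∃ x ∈ S n, y ∈ M.trans x (w n) := by
    rintro n y ⟨hy, hyO⟩
    by_cases hn : k ≤ n
    · obtain ⟨⟨x, hx, hxy⟩, -⟩ := weakSeq_snd_succ_of_ne_empty (hk n hn) ▸ hyO (by omega)
      exact ⟨x, ⟨(weakSeq_snd_subset w n hx).1, fun _ => hx⟩, hxy⟩
    · obtain ⟨x, hx, hxy⟩ := hy
      exact ⟨x, ⟨hx, fun h => absurd h hn⟩, hxy⟩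
  have hne (n : ℕ) : (S n).Nonempty := by
    obtain ⟨y, hy⟩ := Set.nonempty_iff_ne_empty.mpr (hk (n + k) (by omega))
    obtain ⟨p, -, hpS, -⟩ := exists_path_of_forall_exists_pred hpred (n + k)
      ⟨(weakSeq_snd_subset w _ hy).1, fun _ => hy⟩
    exact ⟨p n, hpS n (by omega)⟩
  obtain ⟨ρ, hρS, hρR⟩ := exists_seq_of_forall_exists_pred hpred hne
  exact ⟨ρ, ⟨(hρS 0).1, hρR⟩, fun ℓ hℓ => (hρS ℓ).2 hℓ⟩

section Run

variable {w : ℕ → A} {ρ : ℕ → Q}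

theorem forall_ge_mem_of_frequently (hstep : ∀ ℓ, ρ (ℓ + 1) ∈ M.trans (ρ ℓ) (w ℓ))
    {C : Set Q} (hC : M.IsSCC C) {q : Q} (hq : q ∈ C)
    (hfreq : ∀ n, ∃ m ≥ n, ρ m = q) {N : ℕ} (hN : ρ N = q) : ∀ n ≥ N, ρ n ∈ C := by
  intro n hn
  obtain ⟨m, hm, hρm⟩ := hfreq n
  exact hC.mem_of_reach hq (hN ▸ reach_of_path (fun i _ => hstep i) hn le_rfl)
    (hρm ▸ reach_of_path (fun i _ => hstep i) hm le_rfl)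

theorem exists_accSCC_forall_ge_mem [Finite Q] (hstep : ∀ ℓ, ρ (ℓ + 1) ∈ M.trans (ρ ℓ) (w ℓ))
    {k : ℕ} (hWA : ∀ ℓ ≥ k, ρ ℓ ∈ M.weakAccStates) :
    ∃ C : Set Q, M.IsSCC C ∧ M.InherentlyWeak C ∧ M.AccSCC C ∧ ∃ N : ℕ, ∀ n ≥ N, ρ n ∈ C := by
  obtain ⟨q, hq⟩ : ∃ q, ∃ᶠ n in Filter.atTop, ρ n = q :=
    Filter.frequently_exists.mp (.of_forall fun n => ⟨ρ n, rfl⟩)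
  rw [Filter.frequently_atTop] at hq
  obtain ⟨N, hN, hρN⟩ := hq k
  obtain ⟨C, hSCC, hW, hAcc, hqC⟩ := hρN ▸ hWA N hN
  exact ⟨C, hSCC, hW, hAcc, N, forall_ge_mem_of_frequently hstep hSCC hqC hq hρN⟩

theorem isCycle_of_return (hstep : ∀ ℓ, ρ (ℓ + 1) ∈ M.trans (ρ ℓ) (w ℓ))
    {C : Set Q} {m d : ℕ} (hd : 1 ≤ d) (hret : ρ (m + d) = ρ m)
    (hC : ∀ i ≤ d, ρ (m + i) ∈ C) : M.IsCycle C d (fun i => ρ (m + i)) (fun i => w (m + i)) :=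
  ⟨hd, hret, fun i hi => ⟨hC i hi.le, hC (i + 1) hi, hstep (m + i)⟩⟩

theorem frequently_acc_of_forall_ge_mem [Finite Q] (hstep : ∀ ℓ, ρ (ℓ + 1) ∈ M.trans (ρ ℓ) (w ℓ))
    {C : Set Q} (hSCC : M.IsSCC C) (hW : M.InherentlyWeak C) (hAcc : M.AccSCC C) {N : ℕ}
    (hN : ∀ n ≥ N, ρ n ∈ C) (n : ℕ) :
    ∃ ℓ ≥ n, (ρ ℓ, w ℓ, ρ (ℓ + 1)) ∈ M.acc := by
  set m := max n N
  obtain ⟨i, j, hij, hret⟩ := Set.Finite.exists_lt_map_eq_of_forall_mem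
    (f := fun i => ρ (m + i)) (fun _ => Set.mem_univ _) Set.finite_univ
  have hcyc : M.IsCycle C (j - i) (fun l => ρ (m + i + l)) (fun l => w (m + i + l)) :=
    isCycle_of_return hstep (by omega) (by rw [hret]; congr 1; omega)
      fun l _ => hN _ (by omega)
  obtain ⟨l, -, hacc⟩ := hW.cycleHasAcc hSCC hAcc hcyc
  exact ⟨m + i + l, by omega, hacc⟩

end Run

end NBA

theorem iwc_nonempty_O_gives_accepting_run_general {Q A : Type} [Finite Q]
    (M : NBA Q A) (w : ℕ → A) (k : ℕ) (hk : ∀ ℓ ≥ k, (M.weakSeq w ℓ).2 ≠ ∅) :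
    (∃ ρ : ℕ → Q, M.IsRun w ρ ∧ ∀ ℓ ≥ k, ρ ℓ ∈ (M.weakSeq w ℓ).2) ∧
    (∀ ρ : ℕ → Q, M.IsRun w ρ → (∀ ℓ ≥ k, ρ ℓ ∈ (M.weakSeq w ℓ).2) →
      (∃ C : Set Q, M.IsSCC C ∧ M.InherentlyWeak C ∧ M.AccSCC C ∧
        ∃ N : ℕ, ∀ n ≥ N, ρ n ∈ C) ∧
      M.IsAcceptingRun w ρ) := by
  refine ⟨NBA.exists_run_forall_ge_mem_weakSeq_snd hk, fun ρ hρ hρO => ?_⟩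
  have hWA : ∀ ℓ ≥ k, ρ ℓ ∈ M.weakAccStates := fun ℓ hℓ =>
    (NBA.weakSeq_snd_subset w ℓ (hρO ℓ hℓ)).2
  obtain ⟨C, hSCC, hW, hAcc, N, hN⟩ := NBA.exists_accSCC_forall_ge_mem hρ.2 hWA
  exact ⟨⟨C, hSCC, hW, hAcc, N, hN⟩, hρ,
    NBA.frequently_acc_of_forall_ge_mem hρ.2 hSCC hW hAcc hN⟩

/-- If from level `k` on the `O`-sets of the inherently-weak-SCC
construction are never empty, then there is a run `ρ` of `M` over `w` with
`ρ ℓ ∈ O_ℓ` for all `ℓ ≥ k`; moreover any such run eventually stays in an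
accepting inherently weak SCC, and is accepting. -/
theorem iwc_nonempty_O_gives_accepting_run {Q A : Type} [Finite Q] [Finite A]
    (M : NBA Q A) (w : ℕ → A) (k : ℕ) (hk : ∀ ℓ ≥ k, (M.weakSeq w ℓ).2 ≠ ∅) :
    (∃ ρ : ℕ → Q, M.IsRun w ρ ∧ ∀ ℓ ≥ k, ρ ℓ ∈ (M.weakSeq w ℓ).2) ∧
    (∀ ρ : ℕ → Q, M.IsRun w ρ → (∀ ℓ ≥ k, ρ ℓ ∈ (M.weakSeq w ℓ).2) →
      (∃ C : Set Q, M.IsSCC C ∧ M.InherentlyWeak C ∧ M.AccSCC C ∧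
        ∃ N : ℕ, ∀ n ≥ N, ρ n ∈ C) ∧
      M.IsAcceptingRun w ρ) :=
  iwc_nonempty_O_gives_accepting_run_general M w k hk
end

section
/- Let A = (Q, ι, δ, F) be an NBA over a finite alphabet Σ, let D be a DAC of A, let w : ℕ → Σ be an infinite word, and consider the sequence of level-labelling functions (g_ℓ) of the DAC construction for D with its colors (c_ℓ). Then there exists an accepting run of A over w that eventually stays in D (i.e., ∃N ∈ ℕ with ρ(n) ∈ D for all n ≥ N) if and only if the minimal color occurring infinitely often in the sequence (c_ℓ) is even. -/
open scoped Classical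

namespace NBA

variable {Q A : Type}

/-- An SCC `C` is deterministic if every state has at most one `a`-successor inside `C`. -/
def IsDeterministicSCC (M : NBA Q A) (C : Set Q) : Prop :=
  ∀ q ∈ C, ∀ a : A, (M.trans q a ∩ C).Subsingleton

/-- A DAC: an accepting SCC that is deterministic and not inherently weak. -/
def IsDAC (M : NBA Q A) (C : Set Q) : Prop :=
  M.IsSCC C ∧ M.AccSCC C ∧ M.IsDeterministicSCC C ∧ ¬ M.InherentlyWeak C

/-- `δ_D(S ∩ D, a)`: the states of `D` reached from `S ∩ D` by an `a`-transition inside `D`. -/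
def dacImage (M : NBA Q A) (D S : Set Q) (a : A) : Set Q :=
  {q' ∈ D | ∃ q ∈ S ∩ D, q' ∈ M.trans q a}

/-- The intermediate level-labelling `g'` of the DAC construction: states reached
inside `D` inherit the minimum label of their predecessors, newly entering states
(in the order `≼` on `Q`) get labels `|D| + 1, |D| + 2, …`, and all other states
get `∞`. Here `S` and `S'` are the sets of states reached at the current and next
levels of the run DAG. -/
noncomputable def dacPrime [LinearOrder Q] (M : NBA Q A) (D : Set Q)
    (S S' : Set Q) (a : A) (g : Q → ℕ∞) : Q → ℕ∞ := fun q' =>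
  if q' ∈ M.dacImage D S a then
    sInf {v : ℕ∞ | ∃ q ∈ S ∩ D, q' ∈ M.trans q a ∧ g q = v}
  else if q' ∈ (S' ∩ D) \ M.dacImage D S a then
    ((D.ncard + Set.ncard {p | p ∈ (S' ∩ D) \ M.dacImage D S a ∧ p < q'} + 1 : ℕ) : ℕ∞)
  else ⊤

/-- Rank compression `ord`: each finite label is replaced by its relative position
among the finite labels occurring in the image of `g` on `D`. -/
noncomputable def dacOrd (D : Set Q) (g : Q → ℕ∞) : Q → ℕ∞ := fun q =>
  if g q ≠ ⊤ then
    ((Set.ncard {v : ℕ∞ | v ≤ g q ∧ v ≠ ⊤ ∧ ∃ p ∈ D, g p = v} : ℕ) : ℕ∞)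
  else ⊤

/-- The sequence `g_ℓ` of level-labelling functions of the DAC construction for
the DAC `D` of `M` over the word `w`. -/
noncomputable def dacG [LinearOrder Q] (M : NBA Q A) (D : Set Q) (w : ℕ → A) :
    ℕ → Q → ℕ∞
  | 0 => fun q => if q = M.init ∧ q ∈ D then 1 else ⊤
  | ℓ + 1 =>
      dacOrd D
        (M.dacPrime D (M.reachSet w ℓ) (M.reachSet w (ℓ + 1)) (w ℓ) (M.dacG D w ℓ))

/-- The color `c_ℓ` emitted by the step from level `ℓ` to level `ℓ + 1` of the DAC
construction: with `B(e)` the vanished labels (plus `|D| + 1`) and `G(e)` the labels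
witnessing an accepting transition (plus `|D| + 1`), the color is
`min (2 ⬝ min B(e) − 1) (2 ⬝ min G(e))`. -/
noncomputable def dacColor [LinearOrder Q] (M : NBA Q A) (D : Set Q) (w : ℕ → A)
    (ℓ : ℕ) : ℕ :=
  let g := M.dacG D w ℓ
  let g' := M.dacPrime D (M.reachSet w ℓ) (M.reachSet w (ℓ + 1)) (w ℓ) g
  let B : Set ℕ :=
    insert (D.ncard + 1) {n : ℕ | (∃ q ∈ D, g q = (n : ℕ∞)) ∧ ¬ ∃ q ∈ D, g' q = (n : ℕ∞)}
  let G : Set ℕ :=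
    insert (D.ncard + 1)
      {n : ℕ | ∃ q q' : Q, (q, w ℓ, q') ∈ M.acc ∧ g q = (n : ℕ∞) ∧ g' q' = (n : ℕ∞)}
  min (2 * sInf B - 1) (2 * sInf G)

end NBA

/-!
Determinism of `D` makes every `g_ℓ` injective with labels exactly `1, …, m`, and a label can
only decrease along a transition inside `D`. So a run that eventually stays in `D` eventually
keeps a fixed label `k`: from then on no label `≤ k` vanishes, making every odd color `> 2k`,
while each accepting transition of the run makes a color `≤ 2k`; hence the least color seen
infinitely often is even. Conversely, if that color is `2k`, then eventually no label `≤ k`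
vanishes, so the unique state labelled `k` always has a successor labelled `k`. Following these
states gives a run inside `D`, and every later step of color `2k` is witnessed by an accepting
transition between the two states labelled `k`, i.e. by a transition of this run.
-/

open Filter

lemma exists_eventually_eq_of_eventually_le_succ {α : Type*} [PartialOrder α] [WellFoundedLT α]
    {f : ℕ → α} (hf : ∀ᶠ n in atTop, f (n + 1) ≤ f n) : ∃ a, ∀ᶠ n in atTop, f n = a := by
  obtain ⟨N, hN⟩ := eventually_atTop.mp hf
  have hanti : Antitone fun n => f (n + N) :=
    antitone_nat_of_succ_le fun n => by simpa [Nat.add_right_comm] using hN (n + N) (by omega)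
  obtain ⟨n, hn⟩ := WellFoundedGT.monotone_chain_condition (α := αᵒᵈ) ⟨_, hanti⟩
  refine ⟨f (n + N), map_add_atTop_eq_nat N ▸ eventually_map.mpr ?_⟩
  exact eventually_atTop.mpr ⟨n, fun m hm => (hn m hm).symm⟩

lemma exists_seq_of_forall_exists {α : Type*} {P : ℕ → α → Prop} {R : ℕ → α → α → Prop}
    (h : ∀ n x, P n x → ∃ y, R n x y ∧ P (n + 1) y) {x₀ : α} (hx₀ : P 0 x₀) :
    ∃ τ : ℕ → α, τ 0 = x₀ ∧ ∀ n, P n (τ n) ∧ R n (τ n) (τ (n + 1)) := by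
  choose! next hnext using h
  let τ : ℕ → α := fun n => Nat.rec x₀ next n
  have hτ : ∀ n, P n (τ n) := fun n => Nat.rec hx₀ (fun n ih => (hnext n _ ih).2) n
  exact ⟨τ, rfl, fun n => ⟨hτ n, (hnext n _ (hτ n)).1⟩⟩

namespace Nat

lemma exists_le_frequently_eq {f : ℕ → ℕ} {B : ℕ} (h : ∃ᶠ ℓ in atTop, f ℓ ≤ B) :
    ∃ c ≤ B, ∃ᶠ ℓ in atTop, f ℓ = c :=
  (Set.finite_Iic B).frequently_exists.mp (h.mono fun ℓ hℓ => ⟨f ℓ, hℓ, rfl⟩)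

lemma sInf_setOf_frequently_eq_le {f : ℕ → ℕ} {B : ℕ} (h : ∃ᶠ ℓ in atTop, f ℓ ≤ B) :
    sInf {c | ∃ᶠ i in atTop, f i = c} ≤ B :=
  let ⟨_, hcB, hc⟩ := exists_le_frequently_eq h
  (Nat.sInf_le hc).trans hcB

lemma frequently_eq_sInf_setOf_frequently_eq {f : ℕ → ℕ} {B : ℕ}
    (h : ∃ᶠ ℓ in atTop, f ℓ ≤ B) : ∃ᶠ ℓ in atTop, f ℓ = sInf {c | ∃ᶠ i in atTop, f i = c} :=
  let ⟨c, _, hc⟩ := exists_le_frequently_eq h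
  Nat.sInf_mem (s := {c | ∃ᶠ i in atTop, f i = c}) ⟨c, hc⟩

lemma eventually_sInf_setOf_frequently_eq_le (f : ℕ → ℕ) :
    ∀ᶠ ℓ in atTop, sInf {c | ∃ᶠ i in atTop, f i = c} ≤ f ℓ := by
  have hrare : ∀ c ∈ Set.Iio (sInf {c | ∃ᶠ i in atTop, f i = c}), ∀ᶠ ℓ in atTop, f ℓ ≠ c :=
    fun c hc => not_frequently.mp (Nat.notMem_of_lt_sInf hc)
  filter_upwards [(Set.finite_Iio _).eventually_all.mpr hrare] with ℓ hℓ
  by_contra! hlt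
  exact hℓ _ hlt rfl

end Nat

lemma Set.strictMonoOn_ncard_setOf_lt {α : Type*} [LinearOrder α] [Finite α] (N : Set α) :
    StrictMonoOn (fun q => {r | r ∈ N ∧ r < q}.ncard) N := by
  intro p hp q _ hpq
  refine Set.ncard_lt_ncard ⟨fun r hr => ⟨hr.1, hr.2.trans hpq⟩, fun hsub => ?_⟩
  exact lt_irrefl p (hsub ⟨hp, hpq⟩).2

namespace NBA

section Labels

variable {Q : Type} (D : Set Q) (h : Q → ℕ∞)

def labels : Set ℕ∞ := {v | v ≠ ⊤ ∧ ∃ p ∈ D, h p = v}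

noncomputable def labelRank (x : ℕ∞) : ℕ := (Set.Iic x ∩ labels D h).ncard

variable {D h}

lemma mem_labels {q : Q} (hq : h q ≠ ⊤) (hqD : q ∈ D) : h q ∈ labels D h := ⟨hq, q, hqD, rfl⟩

lemma natCast_mem_labels {n : ℕ} : (n : ℕ∞) ∈ labels D h ↔ ∃ p ∈ D, h p = n :=
  and_iff_right (ENat.natCast_ne_top n)

lemma dacOrd_of_ne_top {q : Q} (hq : h q ≠ ⊤) : dacOrd D h q = labelRank D h (h q) := if_pos hq

lemma dacOrd_eq_top_iff {q : Q} : dacOrd D h q = ⊤ ↔ h q = ⊤ := by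
  by_cases hq : h q = ⊤
  · simp [dacOrd, hq]
  · simp [dacOrd_of_ne_top hq, hq]

variable [Finite Q]

lemma labels_finite : (labels D h).Finite :=
  (D.toFinite.image h).subset fun _ ⟨_, p, hp, hpv⟩ => ⟨p, hp, hpv⟩

lemma labelRank_mono : Monotone (labelRank D h) := fun _ _ hxy =>
  Set.ncard_le_ncard (Set.inter_subset_inter_left _ (Set.Iic_subset_Iic.mpr hxy))
    (labels_finite.subset Set.inter_subset_right)

lemma labelRank_lt_labelRank {x y : ℕ∞} (hxy : x < y) (hy : y ∈ labels D h) :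
    labelRank D h x < labelRank D h y := by
  refine Set.ncard_lt_ncard ⟨Set.inter_subset_inter_left _ (Set.Iic_subset_Iic.mpr hxy.le),
    fun hsub => ?_⟩ (labels_finite.subset Set.inter_subset_right)
  exact not_le_of_gt hxy (hsub ⟨Set.self_mem_Iic, hy⟩).1

lemma strictMonoOn_labelRank : StrictMonoOn (labelRank D h) (labels D h) :=
  fun _ _ _ hy hxy => labelRank_lt_labelRank hxy hy

lemma labelRank_pos {x : ℕ∞} (hx : x ∈ labels D h) : 0 < labelRank D h x :=
  (Set.ncard_pos (labels_finite.subset Set.inter_subset_right)).mpr ⟨x, Set.self_mem_Iic, hx⟩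

lemma labelRank_le_ncard (x : ℕ∞) : labelRank D h x ≤ D.ncard :=
  calc labelRank D h x ≤ (h '' D).ncard :=
        Set.ncard_le_ncard (fun _ ⟨_, _, p, hp, hpv⟩ => ⟨p, hp, hpv⟩) (D.toFinite.image h)
    _ ≤ D.ncard := Set.ncard_image_le D.toFinite

end Labels

section Labelling

variable {Q : Type}

structure IsLabelling (D : Set Q) (h : Q → ℕ∞) : Prop where
  mem : ∀ q, h q ≠ ⊤ → q ∈ D
  inj : ∀ p q, h p = h q → h p ≠ ⊤ → p = q
  ne_zero : ∀ q, h q ≠ 0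

/-- The finite labels of a compact labelling are exactly `1, …, m` for some `m`. -/
structure IsCompactLabelling (D : Set Q) (h : Q → ℕ∞) : Prop extends IsLabelling D h where
  labelRank_eq : ∀ (q : Q) (n : ℕ), h q = n → labelRank D h n = n

variable {D : Set Q} {h : Q → ℕ∞} [Finite Q]

lemma IsCompactLabelling.le_ncard (hh : IsCompactLabelling D h) {q : Q} {n : ℕ}
    (hq : h q = n) : n ≤ D.ncard :=
  hh.labelRank_eq q n hq ▸ labelRank_le_ncard _

lemma injOn_natCast_labelRank :
    Set.InjOn (fun v => (labelRank D h v : ℕ∞)) (labels D h) :=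
  fun _ hx _ hy hxy => strictMonoOn_labelRank.injOn hx hy (Nat.cast_injective hxy)

lemma Iic_inter_labels_dacOrd (x : ℕ∞) :
    Set.Iic (labelRank D h x : ℕ∞) ∩ labels D (dacOrd D h) =
      (fun v => (labelRank D h v : ℕ∞)) '' (Set.Iic x ∩ labels D h) := by
  ext v
  constructor
  · rintro ⟨hvx, hv, p, hp, rfl⟩
    have hpt : h p ≠ ⊤ := fun ht => hv (dacOrd_eq_top_iff.mpr ht)
    rw [dacOrd_of_ne_top hpt] at hvx ⊢
    refine ⟨h p, ⟨Set.mem_Iic.mpr (le_of_not_gt fun hxp => ?_), mem_labels hpt hp⟩, rfl⟩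
    exact (Nat.cast_le.mp (Set.mem_Iic.mp hvx)).not_gt
      (labelRank_lt_labelRank hxp (mem_labels hpt hp))
  · rintro ⟨_, ⟨hvx, hpt, p, hp, rfl⟩, rfl⟩
    exact ⟨Set.mem_Iic.mpr (Nat.cast_le.mpr (labelRank_mono hvx)), ENat.natCast_ne_top _, p, hp,
      dacOrd_of_ne_top hpt⟩

lemma isCompactLabelling_dacOrd (hh : IsLabelling D h) :
    IsCompactLabelling D (dacOrd D h) := by
  have hfin : ∀ {q}, dacOrd D h q ≠ ⊤ → h q ≠ ⊤ := fun hq ht => hq (dacOrd_eq_top_iff.mpr ht)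
  have hlab : ∀ {q}, dacOrd D h q ≠ ⊤ → h q ∈ labels D h := fun hq =>
    mem_labels (hfin hq) (hh.mem _ (hfin hq))
  refine ⟨⟨fun q hq => hh.mem q (hfin hq), fun p q hpq hp => ?_, fun q => ?_⟩, fun q n hq => ?_⟩
  · have hq : dacOrd D h q ≠ ⊤ := hpq ▸ hp
    rw [dacOrd_of_ne_top (hfin hp), dacOrd_of_ne_top (hfin hq)] at hpq
    exact hh.inj p q (injOn_natCast_labelRank (hlab hp) (hlab hq) hpq) (hfin hp)
  · by_cases hq : dacOrd D h q = ⊤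
    · simp [hq]
    · rw [dacOrd_of_ne_top (hfin hq), Ne, Nat.cast_eq_zero]
      exact (labelRank_pos (hlab hq)).ne'
  · have hqt : dacOrd D h q ≠ ⊤ := hq ▸ ENat.natCast_ne_top n
    rw [dacOrd_of_ne_top (hfin hqt), Nat.cast_inj] at hq
    rw [← hq, labelRank, Iic_inter_labels_dacOrd,
      (injOn_natCast_labelRank.mono Set.inter_subset_right).ncard_image]
    rfl

end Labelling

section DacPrime

variable {Q A : Type} [LinearOrder Q] {M : NBA Q A} {D S S' : Set Q} {a : A} {g : Q → ℕ∞}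
  {p q : Q}

lemma exists_dacPrime_eq (hq : q ∈ M.dacImage D S a) :
    ∃ p ∈ S ∩ D, q ∈ M.trans p a ∧ M.dacPrime D S S' a g q = g p := by
  obtain ⟨hqD, p, hp, htr⟩ := hq
  obtain ⟨p', hp', htr', hval⟩ := csInf_mem (⟨g p, p, hp, htr, rfl⟩ :
    {v : ℕ∞ | ∃ p ∈ S ∩ D, q ∈ M.trans p a ∧ g p = v}.Nonempty)
  exact ⟨p', hp', htr', by rw [dacPrime, if_pos ⟨hqD, p, hp, htr⟩, ← hval]⟩

lemma dacPrime_le (hp : p ∈ S ∩ D) (htr : q ∈ M.trans p a) (hqD : q ∈ D) :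
    M.dacPrime D S S' a g q ≤ g p := by
  rw [dacPrime, if_pos ⟨hqD, p, hp, htr⟩]
  exact sInf_le ⟨p, hp, htr, rfl⟩

lemma dacPrime_of_new (hq : q ∈ (S' ∩ D) \ M.dacImage D S a) :
    M.dacPrime D S S' a g q =
      ((D.ncard + {r | r ∈ (S' ∩ D) \ M.dacImage D S a ∧ r < q}.ncard + 1 : ℕ) : ℕ∞) := by
  rw [dacPrime, if_neg hq.2, if_pos hq]

lemma dacPrime_of_not_mem (him : q ∉ M.dacImage D S a) (hnew : q ∉ S' ∩ D) :
    M.dacPrime D S S' a g q = ⊤ := by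
  rw [dacPrime, if_neg him, if_neg fun h => hnew h.1]

lemma mem_of_dacPrime_ne_top (hq : M.dacPrime D S S' a g q ≠ ⊤) : q ∈ D := by
  by_contra hqD
  exact hq (dacPrime_of_not_mem (fun h => hqD h.1) fun h => hqD h.2)

lemma exists_dacPrime_eq_of_le_ncard {n : ℕ} (hq : M.dacPrime D S S' a g q = n)
    (hn : n ≤ D.ncard) : ∃ p ∈ S ∩ D, q ∈ M.trans p a ∧ g p = n := by
  by_cases him : q ∈ M.dacImage D S a
  · obtain ⟨p, hp, htr, hpq⟩ := exists_dacPrime_eq (S' := S') (g := g) him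
    exact ⟨p, hp, htr, hpq ▸ hq⟩
  · by_cases hnew : q ∈ S' ∩ D
    · rw [dacPrime_of_new ⟨hnew, him⟩, Nat.cast_inj] at hq
      omega
    · rw [dacPrime_of_not_mem him hnew] at hq
      exact absurd hq.symm (ENat.natCast_ne_top n)

lemma Iic_inter_labels_dacPrime_subset {n : ℕ} (hn : n ≤ D.ncard) :
    Set.Iic (n : ℕ∞) ∩ labels D (M.dacPrime D S S' a g) ⊆ Set.Iic (n : ℕ∞) ∩ labels D g := by
  rintro v ⟨hvn, hv, q, -, rfl⟩
  lift M.dacPrime D S S' a g q to ℕ using hv with m hm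
  obtain ⟨p, hp, -, hpm⟩ :=
    exists_dacPrime_eq_of_le_ncard hm.symm ((Nat.cast_le.mp (Set.mem_Iic.mp hvn)).trans hn)
  exact ⟨hvn, natCast_mem_labels.mpr ⟨p, hp.2, hpm⟩⟩

lemma dacPrime_ne_top_iff (hg : ∀ q, g q ≠ ⊤ ↔ q ∈ S ∩ D) (hS' : S' = M.stepSet S a) :
    M.dacPrime D S S' a g q ≠ ⊤ ↔ q ∈ S' ∩ D := by
  by_cases him : q ∈ M.dacImage D S a
  · obtain ⟨p, hp, htr, hpq⟩ := exists_dacPrime_eq (S' := S') (g := g) him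
    rw [hpq]
    exact iff_of_true ((hg p).mpr hp) ⟨hS' ▸ ⟨p, hp.1, htr⟩, him.1⟩
  · by_cases hnew : q ∈ S' ∩ D
    · simp [dacPrime_of_new ⟨hnew, him⟩, hnew]
    · simp [dacPrime_of_not_mem him hnew, hnew]

variable [Finite Q]

lemma not_mem_dacImage_of_ncard_lt (hg : IsCompactLabelling D g) {n : ℕ}
    (hq : M.dacPrime D S S' a g q = n) (hn : D.ncard < n) : q ∉ M.dacImage D S a := fun him => by
  obtain ⟨p, -, -, hpq⟩ := exists_dacPrime_eq (S' := S') (g := g) him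
  exact hn.not_ge (hg.le_ncard (hpq ▸ hq))

lemma isLabelling_dacPrime (hg : IsCompactLabelling D g) (hdet : M.IsDeterministicSCC D) :
    IsLabelling D (M.dacPrime D S S' a g) := by
  have hmem : ∀ q, M.dacPrime D S S' a g q ≠ ⊤ → q ∈ D := fun _ => mem_of_dacPrime_ne_top
  refine ⟨hmem, fun p q hpq hp => ?_, fun q => ?_⟩
  -- Equal labels `≤ |D|` are inherited from one predecessor, so determinism separates the
  -- states; labels `> |D|` are the fresh ones, distinct by construction.
  · lift M.dacPrime D S S' a g p to ℕ using hp with n hn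
    by_cases hnD : n ≤ D.ncard
    · obtain ⟨p₀, hp₀, htrp, hgp⟩ := exists_dacPrime_eq_of_le_ncard hn.symm hnD
      obtain ⟨q₀, -, htrq, hgq⟩ := exists_dacPrime_eq_of_le_ncard hpq.symm hnD
      obtain rfl : p₀ = q₀ := hg.inj p₀ q₀ (hgp.trans hgq.symm) (hgp ▸ ENat.natCast_ne_top n)
      have hpD := hmem p (hn ▸ ENat.natCast_ne_top n)
      have hqD := hmem q (hpq ▸ ENat.natCast_ne_top n)
      exact hdet p₀ hp₀.2 a ⟨htrp, hpD⟩ ⟨htrq, hqD⟩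
    · have hnew : ∀ r, ↑n = M.dacPrime D S S' a g r → r ∈ (S' ∩ D) \ M.dacImage D S a :=
        fun r hr => by
          have him := not_mem_dacImage_of_ncard_lt hg hr.symm (not_le.mp hnD)
          by_contra hrnew
          rw [dacPrime_of_not_mem him fun h => hrnew ⟨h, him⟩] at hr
          exact ENat.natCast_ne_top n hr
      have hpN := hnew p hn
      have hqN := hnew q hpq
      rw [dacPrime_of_new hpN, Nat.cast_inj] at hn
      rw [dacPrime_of_new hqN, Nat.cast_inj] at hpq
      exact (Set.strictMonoOn_ncard_setOf_lt _).injOn hpN hqN (by omega)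
  · by_cases him : q ∈ M.dacImage D S a
    · obtain ⟨p, -, -, hpq⟩ := exists_dacPrime_eq (S' := S') (g := g) him
      exact hpq ▸ hg.ne_zero p
    by_cases hnew : q ∈ S' ∩ D
    · rw [dacPrime_of_new ⟨hnew, him⟩]
      exact Nat.cast_ne_zero.mpr (Nat.succ_ne_zero _)
    · rw [dacPrime_of_not_mem him hnew]
      exact ENat.top_ne_zero

end DacPrime

section DacSequence

variable {Q A : Type} [LinearOrder Q] (M : NBA Q A) (D : Set Q) (w : ℕ → A)

/-- The intermediate labelling `g'_{ℓ+1}` of the step from level `ℓ`. -/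
noncomputable def dacG' (ℓ : ℕ) : Q → ℕ∞ :=
  M.dacPrime D (M.reachSet w ℓ) (M.reachSet w (ℓ + 1)) (w ℓ) (M.dacG D w ℓ)

lemma dacG_succ (ℓ : ℕ) : M.dacG D w (ℓ + 1) = dacOrd D (M.dacG' D w ℓ) := rfl

variable {M D w}

lemma dacG_ne_top_iff (ℓ : ℕ) {q : Q} : M.dacG D w ℓ q ≠ ⊤ ↔ q ∈ M.reachSet w ℓ ∩ D := by
  induction ℓ generalizing q with
  | zero =>
    by_cases hq : q = M.init ∧ q ∈ D
    · simp [dacG, hq, reachSet]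
    · simp only [dacG, if_neg hq, ne_eq, not_true_eq_false, false_iff]
      exact hq
  | succ ℓ ih =>
    rw [dacG_succ, Ne, dacOrd_eq_top_iff]
    exact dacPrime_ne_top_iff (fun _ => ih) rfl

variable [Finite Q]

lemma isCompactLabelling_dacG (hdet : M.IsDeterministicSCC D) (ℓ : ℕ) :
    IsCompactLabelling D (M.dacG D w ℓ) := by
  induction ℓ with
  | zero =>
    have hone : ∀ {q}, M.dacG D w 0 q ≠ ⊤ → M.dacG D w 0 q = 1 := fun {q} hq => by
      by_cases hc : q = M.init ∧ q ∈ D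
      · simp only [dacG, if_pos hc]
      · simp [dacG, hc] at hq
    have hinit : ∀ {q}, M.dacG D w 0 q ≠ ⊤ → q = M.init := fun hq =>
      ((dacG_ne_top_iff 0).mp hq).1
    refine ⟨⟨fun q hq => ((dacG_ne_top_iff 0).mp hq).2, fun p q hpq hp => ?_, fun q => ?_⟩,
      fun q n hq => ?_⟩
    · exact (hinit hp).trans (hinit (hpq ▸ hp)).symm
    · by_cases hq : M.dacG D w 0 q = ⊤
      · simp [hq]
      · simp [hone hq]
    · have hqt : M.dacG D w 0 q ≠ ⊤ := hq ▸ ENat.natCast_ne_top n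
      obtain rfl : n = 1 := by exact_mod_cast hq.symm.trans (hone hqt)
      have hlabels : Set.Iic ((1 : ℕ) : ℕ∞) ∩ labels D (M.dacG D w 0) = {1} := by
        refine Set.eq_singleton_iff_unique_mem.mpr ⟨⟨by simp, ?_⟩, fun v ⟨_, hv, p, _, hpv⟩ => ?_⟩
        · exact ⟨by simp, q, ((dacG_ne_top_iff 0).mp hqt).2, hone hqt⟩
        · exact hpv ▸ hone (hpv ▸ hv)
      rw [labelRank, hlabels, Set.ncard_singleton]
  | succ ℓ ih => exact isCompactLabelling_dacOrd (isLabelling_dacPrime ih hdet)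

lemma labelRank_dacG'_le {ℓ n : ℕ} (hn : n ≤ D.ncard) :
    labelRank D (M.dacG' D w ℓ) n ≤ labelRank D (M.dacG D w ℓ) n :=
  Set.ncard_le_ncard (Iic_inter_labels_dacPrime_subset hn)
    (labels_finite.subset Set.inter_subset_right)

variable (hdet : M.IsDeterministicSCC D)
include hdet

lemma dacG_succ_le {ℓ : ℕ} {p q : Q} (htr : q ∈ M.trans p (w ℓ)) (hqD : q ∈ D) :
    M.dacG D w (ℓ + 1) q ≤ M.dacG D w ℓ p := by
  have hg := isCompactLabelling_dacG (w := w) hdet ℓ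
  by_cases hp : M.dacG D w ℓ p = ⊤
  · exact hp ▸ le_top
  obtain ⟨j, hj⟩ := ENat.ne_top_iff_exists.mp hp
  have hle : M.dacG' D w ℓ q ≤ j := hj ▸ dacPrime_le ((dacG_ne_top_iff ℓ).mp hp) htr hqD
  rw [← hj, dacG_succ, dacOrd_of_ne_top (ne_top_of_le_ne_top (ENat.natCast_ne_top j) hle)]
  calc (labelRank D (M.dacG' D w ℓ) (M.dacG' D w ℓ q) : ℕ∞)
      ≤ labelRank D (M.dacG' D w ℓ) j := Nat.cast_le.mpr (labelRank_mono hle)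
    _ ≤ labelRank D (M.dacG D w ℓ) j :=
        Nat.cast_le.mpr (labelRank_dacG'_le (hg.le_ncard hj.symm))
    _ = j := by rw [hg.labelRank_eq p j hj.symm]

lemma dacG'_eq_of_dacG_succ_eq {ℓ j : ℕ} {p q : Q} (hp : M.dacG D w ℓ p = j)
    (htr : q ∈ M.trans p (w ℓ)) (hqD : q ∈ D) (hq : M.dacG D w (ℓ + 1) q = j) :
    M.dacG' D w ℓ q = j ∧
      Set.Iic (j : ℕ∞) ∩ labels D (M.dacG D w ℓ) ⊆ labels D (M.dacG' D w ℓ) := by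
  have hg := isCompactLabelling_dacG (w := w) hdet ℓ
  have hjD := hg.le_ncard hp
  have hpt : M.dacG D w ℓ p ≠ ⊤ := hp ▸ ENat.natCast_ne_top j
  have hle : M.dacG' D w ℓ q ≤ j := hp ▸ dacPrime_le ((dacG_ne_top_iff ℓ).mp hpt) htr hqD
  obtain ⟨u, hu⟩ := ENat.ne_top_iff_exists.mp (ne_top_of_le_ne_top (ENat.natCast_ne_top j) hle)
  have huj : u ≤ j := by exact_mod_cast hu ▸ hle
  rw [dacG_succ, dacOrd_of_ne_top (hu ▸ ENat.natCast_ne_top u), ← hu, Nat.cast_inj] at hq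
  -- `j = rank_{g'} u ≤ rank_g u ≤ rank_g j = j`, so `u = j` and no label `≤ j` is lost.
  have hrank_g : j ≤ labelRank D (M.dacG D w ℓ) u := hq ▸ labelRank_dacG'_le (huj.trans hjD)
  obtain rfl : u = j := by
    by_contra hne
    have hlt := labelRank_lt_labelRank (Nat.cast_lt.mpr (lt_of_le_of_ne huj hne))
      (natCast_mem_labels.mpr ⟨p, hg.mem p hpt, hp⟩)
    rw [hg.labelRank_eq p j hp] at hlt
    omega
  have heq : Set.Iic (u : ℕ∞) ∩ labels D (M.dacG' D w ℓ) =
      Set.Iic (u : ℕ∞) ∩ labels D (M.dacG D w ℓ) := by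
    refine Set.eq_of_subset_of_ncard_le (Iic_inter_labels_dacPrime_subset hjD) ?_
      (labels_finite.subset Set.inter_subset_right)
    change labelRank D _ u ≤ labelRank D _ u
    rw [hq, hg.labelRank_eq p u hp]
  exact ⟨hu.symm, fun v hv => (heq ▸ hv).2⟩

lemma dacG_succ_eq_of_dacG'_eq {ℓ k : ℕ} {q : Q} (hk : k ≤ D.ncard)
    (hsurv : Set.Iic (k : ℕ∞) ∩ labels D (M.dacG D w ℓ) ⊆ labels D (M.dacG' D w ℓ))
    (hq : M.dacG' D w ℓ q = k) : M.dacG D w (ℓ + 1) q = k := by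
  have hg := isCompactLabelling_dacG (w := w) hdet ℓ
  have heq : Set.Iic (k : ℕ∞) ∩ labels D (M.dacG' D w ℓ) =
      Set.Iic (k : ℕ∞) ∩ labels D (M.dacG D w ℓ) :=
    (Iic_inter_labels_dacPrime_subset hk).antisymm fun v hv => ⟨hv.1, hsurv hv⟩
  have hqt : M.dacG' D w ℓ q ≠ ⊤ := hq ▸ ENat.natCast_ne_top k
  have hk' : (k : ℕ∞) ∈ Set.Iic (k : ℕ∞) ∩ labels D (M.dacG' D w ℓ) :=
    ⟨Set.self_mem_Iic, natCast_mem_labels.mpr ⟨q, mem_of_dacPrime_ne_top hqt, hq⟩⟩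
  obtain ⟨p, -, hp⟩ := natCast_mem_labels.mp (heq ▸ hk').2
  rw [dacG_succ, dacOrd_of_ne_top hqt, hq, labelRank, heq, ← labelRank,
    hg.labelRank_eq p k hp]

lemma exists_dacG_succ_eq {ℓ k : ℕ} {x : Q}
    (hsurv : Set.Iic (k : ℕ∞) ∩ labels D (M.dacG D w ℓ) ⊆ labels D (M.dacG' D w ℓ))
    (hx : M.dacG D w ℓ x = k) : ∃ y ∈ M.trans x (w ℓ), M.dacG D w (ℓ + 1) y = k := by
  have hg := isCompactLabelling_dacG (w := w) hdet ℓ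
  have hk := hg.le_ncard hx
  have hxk : (k : ℕ∞) ∈ Set.Iic (k : ℕ∞) ∩ labels D (M.dacG D w ℓ) :=
    ⟨Set.self_mem_Iic, natCast_mem_labels.mpr ⟨x, hg.mem x (hx ▸ ENat.natCast_ne_top k), hx⟩⟩
  obtain ⟨y, -, hy⟩ := natCast_mem_labels.mp (hsurv hxk)
  obtain ⟨p, -, htr, hp⟩ := exists_dacPrime_eq_of_le_ncard hy hk
  obtain rfl : p = x := hg.inj p x (hp.trans hx.symm) (hp ▸ ENat.natCast_ne_top k)
  exact ⟨y, htr, dacG_succ_eq_of_dacG'_eq hdet hk hsurv hy⟩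

end DacSequence

section DacColor

variable {Q A : Type} [LinearOrder Q] (M : NBA Q A) (D : Set Q) (w : ℕ → A)

/-- `B(e)` for the step `e` from level `ℓ`. -/
def vanishedLabels (ℓ : ℕ) : Set ℕ :=
  insert (D.ncard + 1)
    {n | (∃ q ∈ D, M.dacG D w ℓ q = n) ∧ ¬ ∃ q ∈ D, M.dacG' D w ℓ q = n}

/-- `G(e)` for the step `e` from level `ℓ`. -/
def acceptingLabels (ℓ : ℕ) : Set ℕ :=
  insert (D.ncard + 1)
    {n | ∃ q q' : Q, (q, w ℓ, q') ∈ M.acc ∧ M.dacG D w ℓ q = n ∧ M.dacG' D w ℓ q' = n}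

lemma dacColor_eq (ℓ : ℕ) : M.dacColor D w ℓ =
    min (2 * sInf (M.vanishedLabels D w ℓ) - 1) (2 * sInf (M.acceptingLabels D w ℓ)) := rfl

variable {M D w} {ℓ k : ℕ}

lemma vanishedLabels_nonempty : (M.vanishedLabels D w ℓ).Nonempty := ⟨_, Set.mem_insert _ _⟩

lemma acceptingLabels_nonempty : (M.acceptingLabels D w ℓ).Nonempty := ⟨_, Set.mem_insert _ _⟩

lemma dacColor_le_two_mul_ncard_add_one : M.dacColor D w ℓ ≤ 2 * D.ncard + 1 := by
  have : sInf (M.vanishedLabels D w ℓ) ≤ D.ncard + 1 := Nat.sInf_le (Set.mem_insert _ _)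
  rw [dacColor_eq]
  omega

lemma Iic_inter_labels_subset_of_two_mul_le_dacColor (hk : 0 < k)
    (hc : 2 * k ≤ M.dacColor D w ℓ) :
    Set.Iic (k : ℕ∞) ∩ labels D (M.dacG D w ℓ) ⊆ labels D (M.dacG' D w ℓ) := by
  rintro _ ⟨hvk, hv, q, hqD, rfl⟩
  obtain ⟨n, hn⟩ := ENat.ne_top_iff_exists.mp hv
  rw [← hn] at hvk ⊢
  by_contra hvan
  have hB : sInf (M.vanishedLabels D w ℓ) ≤ n := Nat.sInf_le (Set.mem_insert_of_mem _
    ⟨⟨q, hqD, hn.symm⟩, fun ⟨p, hpD, hp⟩ => hvan (natCast_mem_labels.mpr ⟨p, hpD, hp⟩)⟩)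
  have hnk : n ≤ k := Nat.cast_le.mp (Set.mem_Iic.mp hvk)
  rw [dacColor_eq] at hc
  omega

lemma lt_sInf_vanishedLabels (hk : k ≤ D.ncard)
    (hsurv : Set.Iic (k : ℕ∞) ∩ labels D (M.dacG D w ℓ) ⊆ labels D (M.dacG' D w ℓ)) :
    k < sInf (M.vanishedLabels D w ℓ) := by
  refine le_csInf vanishedLabels_nonempty ?_
  rintro n (rfl | ⟨⟨q, hqD, hq⟩, hvan⟩)
  · omega
  · by_contra! hnk
    have hn : (n : ℕ∞) ∈ Set.Iic (k : ℕ∞) ∩ labels D (M.dacG D w ℓ) :=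
      ⟨Set.mem_Iic.mpr (Nat.cast_le.mpr (Nat.le_of_lt_succ hnk)),
        natCast_mem_labels.mpr ⟨q, hqD, hq⟩⟩
    exact hvan (natCast_mem_labels.mp (hsurv hn))

lemma dacColor_le_of_mem_acc {q q' : Q} (hacc : (q, w ℓ, q') ∈ M.acc)
    (hq : M.dacG D w ℓ q = k) (hq' : M.dacG' D w ℓ q' = k) : M.dacColor D w ℓ ≤ 2 * k := by
  have : sInf (M.acceptingLabels D w ℓ) ≤ k :=
    Nat.sInf_le (Set.mem_insert_of_mem _ ⟨q, q', hacc, hq, hq'⟩)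
  rw [dacColor_eq]
  omega

lemma even_dacColor (hB : k < sInf (M.vanishedLabels D w ℓ)) (hc : M.dacColor D w ℓ ≤ 2 * k) :
    Even (M.dacColor D w ℓ) := by
  rw [dacColor_eq] at hc ⊢
  rw [min_eq_right (by omega)]
  exact even_two_mul _

lemma exists_mem_acc_of_dacColor_eq (hk : 0 < k) (hkD : k ≤ D.ncard)
    (hc : M.dacColor D w ℓ = 2 * k) :
    ∃ q q' : Q, (q, w ℓ, q') ∈ M.acc ∧ M.dacG D w ℓ q = k ∧ M.dacG' D w ℓ q' = k := by
  have hG : sInf (M.acceptingLabels D w ℓ) = k := by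
    rw [dacColor_eq] at hc
    omega
  rcases hG ▸ Nat.sInf_mem (acceptingLabels_nonempty (M := M)) with h | h
  · omega
  · exact h

lemma dacColor_pos [Finite Q] (hdet : M.IsDeterministicSCC D) : 0 < M.dacColor D w ℓ := by
  have hg := isCompactLabelling_dacG (w := w) hdet ℓ
  have hne : ∀ {q : Q}, M.dacG D w ℓ q ≠ ((0 : ℕ) : ℕ∞) := hg.ne_zero _
  have hB : sInf (M.vanishedLabels D w ℓ) ≠ 0 := fun h0 => by
    rcases h0 ▸ Nat.sInf_mem vanishedLabels_nonempty with h | ⟨⟨q, -, hq⟩, -⟩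
    exacts [by omega, hne hq]
  have hG : sInf (M.acceptingLabels D w ℓ) ≠ 0 := fun h0 => by
    rcases h0 ▸ Nat.sInf_mem acceptingLabels_nonempty with h | ⟨q, -, -, hq, -⟩
    exacts [by omega, hne hq]
  rw [dacColor_eq]
  omega

end DacColor

section Runs

variable {Q A : Type} {M : NBA Q A} {w : ℕ → A}

lemma IsRun.mem_reachSet {ρ : ℕ → Q} (hρ : M.IsRun w ρ) (ℓ : ℕ) : ρ ℓ ∈ M.reachSet w ℓ := by
  induction ℓ with
  | zero => exact hρ.1
  | succ ℓ ih => exact ⟨ρ ℓ, ih, hρ.2 ℓ⟩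

lemma isAcceptingRun_iff {ρ : ℕ → Q} : M.IsAcceptingRun w ρ ↔
    M.IsRun w ρ ∧ ∃ᶠ ℓ in atTop, (ρ ℓ, w ℓ, ρ (ℓ + 1)) ∈ M.acc := by
  rw [IsAcceptingRun, frequently_atTop]

lemma exists_isRun_of_mem_reachSet {s : ℕ} {τ : ℕ → Q} (hτ₀ : τ 0 ∈ M.reachSet w s)
    (hτ : ∀ n, τ (n + 1) ∈ M.trans (τ n) (w (s + n))) :
    ∃ ρ, M.IsRun w ρ ∧ ∀ n, ρ (s + n) = τ n := by
  induction s generalizing τ with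
  | zero => exact ⟨τ, ⟨hτ₀, by simpa using hτ⟩, by simp⟩
  | succ s ih =>
    obtain ⟨p, hp, htr⟩ := hτ₀
    obtain ⟨ρ, hρ, hρτ⟩ := ih (τ := fun n => if n = 0 then p else τ (n - 1)) hp fun n => by
      rcases n with _ | n
      · simpa using htr
      · simpa [show s + 1 + n = s + (n + 1) by omega] using hτ n
    exact ⟨ρ, hρ, fun n => by simpa [show s + 1 + n = s + (n + 1) by omega] using hρτ (n + 1)⟩

end Runs

section Acceptance

variable {Q A : Type} [LinearOrder Q] [Finite Q] {M : NBA Q A} {D : Set Q} {w : ℕ → A}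
  (hdet : M.IsDeterministicSCC D)
include hdet

lemma exists_isRun_forall_ge_dacG_eq {s k : ℕ} {q : Q}
    (hsurv : ∀ ℓ ≥ s, Set.Iic (k : ℕ∞) ∩ labels D (M.dacG D w ℓ) ⊆ labels D (M.dacG' D w ℓ))
    (hq : M.dacG D w s q = k) : ∃ ρ, M.IsRun w ρ ∧ ∀ ℓ ≥ s, M.dacG D w ℓ (ρ ℓ) = k := by
  obtain ⟨τ, rfl, hτ⟩ := exists_seq_of_forall_exists
    (P := fun n x => M.dacG D w (s + n) x = k) (R := fun n x y => y ∈ M.trans x (w (s + n)))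
    (fun n _ hx => exists_dacG_succ_eq hdet (hsurv (s + n) (Nat.le_add_right s n)) hx) hq
  obtain ⟨ρ, hρ, hρτ⟩ := exists_isRun_of_mem_reachSet
    ((dacG_ne_top_iff s).mp (hq ▸ ENat.natCast_ne_top k)).1 fun n => (hτ n).2
  refine ⟨ρ, hρ, fun ℓ hℓ => ?_⟩
  obtain ⟨n, rfl⟩ := Nat.exists_eq_add_of_le hℓ
  exact hρτ n ▸ (hτ n).1

lemma mem_acc_of_dacColor_eq {ℓ k : ℕ} {x y : Q} (hk : 0 < k) (hkD : k ≤ D.ncard)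
    (hsurv : Set.Iic (k : ℕ∞) ∩ labels D (M.dacG D w ℓ) ⊆ labels D (M.dacG' D w ℓ))
    (hc : M.dacColor D w ℓ = 2 * k) (hx : M.dacG D w ℓ x = k)
    (hy : M.dacG D w (ℓ + 1) y = k) : (x, w ℓ, y) ∈ M.acc := by
  obtain ⟨q, q', hacc, hq, hq'⟩ := exists_mem_acc_of_dacColor_eq hk hkD hc
  have hinj := fun ℓ => (isCompactLabelling_dacG (w := w) hdet ℓ).inj
  obtain rfl : q = x := hinj ℓ q x (hq.trans hx.symm) (hq ▸ ENat.natCast_ne_top k)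
  have hq'k := dacG_succ_eq_of_dacG'_eq hdet hkD hsurv hq'
  obtain rfl : q' = y := hinj (ℓ + 1) q' y (hq'k.trans hy.symm) (hq'k ▸ ENat.natCast_ne_top k)
  exact hacc

lemma even_sInf_frequently_dacColor {ρ : ℕ → Q} (hρ : M.IsAcceptingRun w ρ) {N : ℕ}
    (hN : ∀ n ≥ N, ρ n ∈ D) :
    Even (sInf {c | ∃ᶠ ℓ in atTop, M.dacColor D w ℓ = c}) := by
  obtain ⟨hrun, hacc⟩ := isAcceptingRun_iff.mp hρ
  have hD : ∀ᶠ ℓ in atTop, ρ ℓ ∈ D ∧ ρ (ℓ + 1) ∈ D :=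
    eventually_atTop.mpr ⟨N, fun ℓ hℓ => ⟨hN ℓ hℓ, hN (ℓ + 1) (by omega)⟩⟩
  obtain ⟨x, hx⟩ := exists_eventually_eq_of_eventually_le_succ
    (f := fun ℓ => M.dacG D w ℓ (ρ ℓ)) (hD.mono fun ℓ hℓ => dacG_succ_le hdet (hrun.2 ℓ) hℓ.2)
  obtain ⟨ℓ₀, hℓ₀, hℓ₀D, -⟩ := (hx.and hD).exists
  obtain ⟨k, rfl⟩ := ENat.ne_top_iff_exists.mp
    (hℓ₀ ▸ (dacG_ne_top_iff ℓ₀).mpr ⟨hrun.mem_reachSet ℓ₀, hℓ₀D⟩)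
  have hkD := (isCompactLabelling_dacG hdet ℓ₀).le_ncard hℓ₀
  have hstable : ∀ᶠ ℓ in atTop, M.dacG D w ℓ (ρ ℓ) = k ∧ M.dacG' D w ℓ (ρ (ℓ + 1)) = k ∧
      k < sInf (M.vanishedLabels D w ℓ) := by
    filter_upwards [hx, (tendsto_add_atTop_nat 1).eventually hx, hD] with ℓ hℓ hℓ₁ hℓD
    obtain ⟨h', hsurv⟩ := dacG'_eq_of_dacG_succ_eq hdet hℓ (hrun.2 ℓ) hℓD.2 hℓ₁
    exact ⟨hℓ, h', lt_sInf_vanishedLabels hkD hsurv⟩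
  have hfreq : ∃ᶠ ℓ in atTop, M.dacColor D w ℓ ≤ 2 * k := (hacc.and_eventually hstable).mono
    fun ℓ ⟨hℓacc, hℓ, h', _⟩ => dacColor_le_of_mem_acc hℓacc hℓ h'
  obtain ⟨ℓ, hℓc, -, -, hB⟩ :=
    ((Nat.frequently_eq_sInf_setOf_frequently_eq hfreq).and_eventually hstable).exists
  rw [← hℓc]
  exact even_dacColor hB (hℓc ▸ Nat.sInf_setOf_frequently_eq_le hfreq)

lemma exists_isAcceptingRun_of_even
    (heven : Even (sInf {c | ∃ᶠ ℓ in atTop, M.dacColor D w ℓ = c})) :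
    ∃ ρ : ℕ → Q, M.IsAcceptingRun w ρ ∧ ∃ N : ℕ, ∀ n ≥ N, ρ n ∈ D := by
  have hbound : ∀ ℓ, M.dacColor D w ℓ ≤ 2 * D.ncard + 1 := fun _ =>
    dacColor_le_two_mul_ncard_add_one
  have hI := Nat.frequently_eq_sInf_setOf_frequently_eq (Frequently.of_forall hbound)
  obtain ⟨k, hk⟩ := heven
  obtain ⟨ℓ₀, hℓ₀⟩ := hI.exists
  have hk0 : 0 < k := by have := dacColor_pos (w := w) (ℓ := ℓ₀) hdet; omega
  have hkD : k ≤ D.ncard := by have := hbound ℓ₀; omega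
  have hsurv : ∀ᶠ ℓ in atTop,
      Set.Iic (k : ℕ∞) ∩ labels D (M.dacG D w ℓ) ⊆ labels D (M.dacG' D w ℓ) :=
    (Nat.eventually_sInf_setOf_frequently_eq_le (M.dacColor D w)).mono fun ℓ hℓ =>
      Iic_inter_labels_subset_of_two_mul_le_dacColor hk0 (by omega)
  obtain ⟨N, hsurv⟩ := eventually_atTop.mp hsurv
  obtain ⟨s, hsc, hsN⟩ := (hI.and_eventually (eventually_ge_atTop N)).exists
  have hs : M.dacColor D w s = 2 * k := by omega
  obtain ⟨_, _, -, -, hq'⟩ := exists_mem_acc_of_dacColor_eq hk0 hkD hs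
  obtain ⟨ρ, hρ, hρk⟩ := exists_isRun_forall_ge_dacG_eq hdet (fun ℓ hℓ => hsurv ℓ (by omega))
    (dacG_succ_eq_of_dacG'_eq hdet hkD (hsurv s hsN) hq')
  refine ⟨ρ, isAcceptingRun_iff.mpr ⟨hρ, ?_⟩, s + 1, fun n hn =>
    (isCompactLabelling_dacG hdet n).mem _ (hρk n hn ▸ ENat.natCast_ne_top k)⟩
  refine (hI.and_eventually (eventually_ge_atTop (s + 1))).mono fun ℓ ⟨hc, hℓ⟩ => ?_
  exact mem_acc_of_dacColor_eq hdet hk0 hkD (hsurv ℓ (by omega)) (by omega) (hρk ℓ hℓ)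
    (hρk (ℓ + 1) (by omega))

end Acceptance

end NBA

theorem dac_accepting_iff_min_infinite_color_even_general {Q A : Type}
    [Fintype Q] [LinearOrder Q]
    (M : NBA Q A) (D : Set Q) (hD : M.IsDAC D) (w : ℕ → A) :
    (∃ ρ : ℕ → Q, M.IsAcceptingRun w ρ ∧ ∃ N : ℕ, ∀ n ≥ N, ρ n ∈ D) ↔
      Even (sInf {c : ℕ | ∀ n : ℕ, ∃ ℓ ≥ n, M.dacColor D w ℓ = c}) := by
  have hdet : M.IsDeterministicSCC D := hD.2.2.1
  simp only [← frequently_atTop]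
  exact ⟨fun ⟨_, hρ, _, hN⟩ => NBA.even_sInf_frequently_dacColor hdet hρ hN,
    NBA.exists_isAcceptingRun_of_even hdet⟩

/-- There is an accepting run of `M` over `w` eventually staying in
the DAC `D` iff the minimal color occurring infinitely often in the color sequence
of the DAC construction for `D` is even. -/
theorem dac_accepting_iff_min_infinite_color_even {Q A : Type}
    [Fintype Q] [LinearOrder Q] [Finite A]
    (M : NBA Q A) (D : Set Q) (hD : M.IsDAC D) (w : ℕ → A) :
    (∃ ρ : ℕ → Q, M.IsAcceptingRun w ρ ∧ ∃ N : ℕ, ∀ n ≥ N, ρ n ∈ D) ↔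
      Even (sInf {c : ℕ | ∀ n : ℕ, ∃ ℓ ≥ n, M.dacColor D w ℓ = c}) :=
  dac_accepting_iff_min_infinite_color_even_general M D hD w
end
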